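/- Let p be a prime, q = p^n, m ≥ 1, l = q^m, and π a finite p-group. The embedding of fields 𝔽_q ⊆ 𝔽_l induces an injective ring homomorphism W(𝔽_q) → W(𝔽_l) of Witt vector rings and hence a group homomorphism ι : M_q → M_l between the abelian groups defined in the context. Then ι is injective. -/

import Mathlib

namespace GRJJ


variable (R : Type*) [CommRing R] (π : Type*) [Group π]

/-- The augmentation homomorphism of a group ring, sending every `g : π` to `1`. -/
noncomputable def aug : MonoidAlgebra R π →ₐ[R] R :=
  MonoidAlgebra.lift R R π 1

/-- The augmentation ideal of a group ring. -/
noncomputable def augIdeal : Ideal (MonoidAlgebra R π) :=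
  RingHom.ker (aug R π).toRingHom

/-- The group `1 + I` of normalized units of the group ring `R[π]`:
units `u` with `u - 1` in the augmentation ideal. -/
noncomputable def normalizedUnits : Subgroup (MonoidAlgebra R π)ˣ where
  carrier := {u | (u : MonoidAlgebra R π) - 1 ∈ augIdeal R π}
  one_mem' := by simp
  mul_mem' := by
    intro u v hu hv
    have h : ((u * v : (MonoidAlgebra R π)ˣ) : MonoidAlgebra R π) - 1 =
        (u : MonoidAlgebra R π) * ((v : MonoidAlgebra R π) - 1) +
          ((u : MonoidAlgebra R π) - 1) := by
      push_cast
      noncomm_ring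
    show ((u * v : (MonoidAlgebra R π)ˣ) : MonoidAlgebra R π) - 1 ∈ augIdeal R π
    rw [h]
    exact (augIdeal R π).add_mem ((augIdeal R π).mul_mem_left _ hv) hu
  inv_mem' := by
    intro u hu
    have h : ((u⁻¹ : (MonoidAlgebra R π)ˣ) : MonoidAlgebra R π) - 1 =
        ((u⁻¹ : (MonoidAlgebra R π)ˣ) : MonoidAlgebra R π) *
          (1 - (u : MonoidAlgebra R π)) := by
      rw [mul_sub, mul_one, Units.inv_mul]
    show ((u⁻¹ : (MonoidAlgebra R π)ˣ) : MonoidAlgebra R π) - 1 ∈ augIdeal R π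
    rw [h]
    refine (augIdeal R π).mul_mem_left _ ?_
    simpa using (augIdeal R π).neg_mem hu



variable (p : ℕ) [Fact p.Prime]

/-- The map `Ψ : R_q[π] → R_q[π]`, `Σ aₘ g ↦ Σ φ(aₘ) gᵖ`, where `φ` is the Frobenius
endomorphism of the Witt vectors `R_q = W(𝔽_q)`. -/
noncomputable def psi (K : Type*) [CommRing K] (π : Type*) [Group π]
    (x : MonoidAlgebra (WittVector p K) π) : MonoidAlgebra (WittVector p K) π :=
  MonoidAlgebra.ofCoeff (Finsupp.mapDomain (fun g : π => g ^ p)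
    (Finsupp.mapRange (⇑(WittVector.frobenius : WittVector p K →+* WittVector p K))
      (map_zero _) x.coeff))

/-- The subgroup of relations defining `M_q`: the additive subgroup of `R_q[π]` generated
by the elements `x - g⁻¹xg` and `p•x - Ψ(x)` for `x` in the augmentation ideal. -/
noncomputable def MqRel (K : Type*) [CommRing K] (π : Type*) [Group π] :
    AddSubgroup (MonoidAlgebra (WittVector p K) π) :=
  AddSubgroup.closure
    ({y | ∃ x ∈ augIdeal (WittVector p K) π, ∃ g : π,
        y = x - MonoidAlgebra.of (WittVector p K) π g⁻¹ * x *
          MonoidAlgebra.of (WittVector p K) π g} ∪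
      {y | ∃ x ∈ augIdeal (WittVector p K) π, y = p • x - psi p K π x})

/-- The abelian group `M_q`: the quotient of the augmentation ideal of `W(𝔽_q)[π]` by the
relations `x ≡ g⁻¹xg` and `p•x ≡ Ψ(x)`. -/
abbrev Mq (K : Type*) [CommRing K] (π : Type*) [Group π] :=
  ↥(augIdeal (WittVector p K) π).toAddSubgroup ⧸
    ((MqRel p K π).addSubgroupOf (augIdeal (WittVector p K) π).toAddSubgroup)

/-!
Let `ρ` send each `g ∈ π` to a fixed representative of its conjugacy class, extended additively to
`R[π]`, and let `A = ρ ∘ Ψ`. Then `ρ` kills the conjugation relations, `x - ρ x` is a sum of them,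
and `ρ (p • y - Ψ y) = p • v - A v` with `v = ρ y`; moreover `A` is nilpotent on augmentation-zero
elements because `π` has exponent a power of `p`. So if the image of `x ∈ I_q` in `I_l` is a
relation, `p • v - A v` lies in the image of `W(𝔽_q)[π]`. That image is `A`-stable and
`p`-saturated (Frobenius is bijective on a perfect field), so descending along the nilpotency of
`A` puts `v` itself in the image, and its preimage exhibits `x` as a relation over `W(𝔽_q)`.
-/
open scoped MonoidAlgebra

theorem _root_.AddSubgroup.mem_of_nsmul_sub_mem {N : Type*} [AddCommGroup N] (S : AddSubgroup N)
    (A : N →+ N) (n : ℕ) (hA : S ≤ S.comap A) (hS : ∀ v, n • v ∈ S → v ∈ S) {k : ℕ} :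
    ∀ {v : N}, (⇑A)^[k] v = 0 → n • v - A v ∈ S → v ∈ S := by
  induction k with
  | zero => rintro v rfl -; exact S.zero_mem
  | succ k ih =>
    intro v hv hnv
    have hAnv := hA hnv
    rw [AddSubgroup.mem_comap, map_sub, map_nsmul] at hAnv
    have hAv : A v ∈ S := ih hv hAnv
    exact hS v (sub_add_cancel (n • v) (A v) ▸ S.add_mem hnv hAv)

section WittVector

open WittVector

variable {p : ℕ} [Fact p.Prime] {K L : Type*} [CommRing K] [CommRing L]

theorem _root_.WittVector.map_frobenius (f : K →+* L) (x : WittVector p K) :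
    map f (frobenius x) = frobenius (map f x) := by
  ext n
  rw [map_coeff, coeff_frobenius, coeff_frobenius, MvPolynomial.map_aeval, algebraMap_int_eq,
    RingHom.ext_int (f.comp (Int.castRingHom K)) (Int.castRingHom L)]
  rfl

theorem _root_.WittVector.mem_range_map_of_nsmul_mem [CharP K p] [PerfectRing K p] [CharP L p]
    [IsReduced L]
    (f : K →+* L) {a : WittVector p L} (ha : p • a ∈ (map f).range) : a ∈ (map f).range := by
  obtain ⟨b, hb⟩ := ha
  refine ⟨mk p fun n => (_root_.frobeniusEquiv K p).symm (b.coeff (n + 1)), ?_⟩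
  ext n
  apply frobenius_inj L p
  have hcoeff := congrArg (fun x => x.coeff (n + 1)) hb
  simp only [map_coeff, nsmul_eq_mul, mul_comm (p : WittVector p L), mul_charP_coeff_succ]
    at hcoeff
  rw [map_coeff, coeff_mk, ← f.map_frobenius, frobenius_apply_frobeniusEquiv_symm, hcoeff]
  rfl

end WittVector

theorem _root_.MonoidAlgebra.mem_range_map_of_nsmul_mem {R S M : Type*} [Semiring R]
    [Semiring S] (f : R →+ S) (n : ℕ) (hf : ∀ a, n • a ∈ Set.range f → a ∈ Set.range f) {v : S[M]}
    (hv : n • v ∈ Set.range (MonoidAlgebra.map (M := M) f)) :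
    v ∈ Set.range (MonoidAlgebra.map (M := M) f) := by
  rw [MonoidAlgebra.range_map] at hv ⊢
  exact fun g => hf _ (hv g)

section ConjRep

variable {G : Type*} [Monoid G]

noncomputable def conjRep (g : G) : G :=
  (ConjClasses.mk g).out

theorem isConj_conjRep (g : G) : IsConj (conjRep g) g := by
  rw [← ConjClasses.mk_eq_mk_iff_isConj, conjRep, ← ConjClasses.quotient_mk_eq_mk]
  exact Quotient.out_eq (s := IsConj.setoid G) _

theorem conjRep_eq_conjRep_iff {a b : G} : conjRep a = conjRep b ↔ IsConj a b :=
  ⟨fun h => (isConj_conjRep a).symm.trans (h ▸ isConj_conjRep b),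
    fun h => by rw [conjRep, conjRep, ConjClasses.mk_eq_mk_iff_isConj.mpr h]⟩

theorem conjRep_conjRep (g : G) : conjRep (conjRep g) = conjRep g :=
  conjRep_eq_conjRep_iff.mpr (isConj_conjRep g)

theorem conjRep_pow_conjRep (g : G) (n : ℕ) : conjRep (conjRep g ^ n) = conjRep (g ^ n) :=
  conjRep_eq_conjRep_iff.mpr ((isConj_conjRep g).pow n)

theorem conjRep_one : conjRep (1 : G) = 1 :=
  isConj_one_right.mp (isConj_conjRep 1).symm

end ConjRep

theorem conjRep_inv_mul_mul {G : Type*} [Group G] (g h : G) : conjRep (g⁻¹ * h * g) = conjRep h :=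
  conjRep_eq_conjRep_iff.mpr (isConj_iff.mpr ⟨g, by group⟩)

section GroupRing

variable {R S : Type*} [CommRing R] [CommRing S] {π : Type*} [Group π]

theorem aug_single (g : π) (a : R) : aug R π (MonoidAlgebra.single g a) = a := by
  simp [aug, MonoidAlgebra.lift_single]

theorem mem_augIdeal_iff {x : R[π]} : x ∈ augIdeal R π ↔ aug R π x = 0 :=
  RingHom.mem_ker

theorem aug_mapRingHom (f : R →+* S) (x : R[π]) :
    aug S π (MonoidAlgebra.mapRingHom π f x) = f (aug R π x) := by
  induction x using MonoidAlgebra.induction_linear with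
  | zero => simp
  | add x y hx hy => simp only [map_add, hx, hy]
  | single g a => rw [MonoidAlgebra.mapRingHom_single, aug_single, aug_single]

theorem of_inv_mul_single_mul_of (g h : π) (a : R) :
    MonoidAlgebra.of R π g⁻¹ * MonoidAlgebra.single h a * MonoidAlgebra.of R π g =
      MonoidAlgebra.single (g⁻¹ * h * g) a := by
  simp [MonoidAlgebra.of_apply, MonoidAlgebra.single_mul_single]

variable (R π) in
noncomputable def conjProj : R[π] →+ R[π] where
  toFun := MonoidAlgebra.mapDomain conjRep
  map_zero' := MonoidAlgebra.mapDomain_zero _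
  map_add' := MonoidAlgebra.mapDomain_add _

theorem conjProj_single (g : π) (a : R) :
    conjProj R π (MonoidAlgebra.single g a) = MonoidAlgebra.single (conjRep g) a :=
  MonoidAlgebra.mapDomain_single

theorem aug_conjProj (x : R[π]) : aug R π (conjProj R π x) = aug R π x := by
  induction x using MonoidAlgebra.induction_linear with
  | zero => simp
  | add x y hx hy => simp only [map_add, hx, hy]
  | single g a => rw [conjProj_single, aug_single, aug_single]

theorem conjProj_mapRingHom (f : R →+* S) (x : R[π]) :
    conjProj S π (MonoidAlgebra.mapRingHom π f x) =
      MonoidAlgebra.mapRingHom π f (conjProj R π x) := by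
  induction x using MonoidAlgebra.induction_linear with
  | zero => simp
  | add x y hx hy => simp only [map_add, hx, hy]
  | single g a => simp only [MonoidAlgebra.mapRingHom_single, conjProj_single]

theorem conjProj_of_inv_mul_mul_of (g : π) (x : R[π]) :
    conjProj R π (MonoidAlgebra.of R π g⁻¹ * x * MonoidAlgebra.of R π g) = conjProj R π x := by
  induction x using MonoidAlgebra.induction_linear with
  | zero => simp
  | add x y hx hy => rw [mul_add, add_mul, map_add, map_add, hx, hy]
  | single h a => rw [of_inv_mul_single_mul_of, conjProj_single, conjProj_single,
      conjRep_inv_mul_mul]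

variable (R π) in
def conjRel : Set R[π] :=
  {y | ∃ x ∈ augIdeal R π, ∃ g : π,
    y = x - MonoidAlgebra.of R π g⁻¹ * x * MonoidAlgebra.of R π g}

theorem conjProj_eq_zero_of_mem_closure {c : R[π]} (hc : c ∈ AddSubgroup.closure (conjRel R π)) :
    conjProj R π c = 0 := by
  suffices AddSubgroup.closure (conjRel R π) ≤ (conjProj R π).ker from this hc
  rw [AddSubgroup.closure_le]
  rintro _ ⟨x, -, g, rfl⟩
  rw [SetLike.mem_coe, AddMonoidHom.mem_ker, map_sub, conjProj_of_inv_mul_mul_of, sub_self]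

theorem sub_conjProj_mem_closure (x : R[π]) :
    x - conjProj R π x ∈ AddSubgroup.closure (conjRel R π) := by
  induction x using MonoidAlgebra.induction_linear with
  | zero => simp
  | add x y hx hy => simpa only [map_add, add_sub_add_comm] using add_mem hx hy
  | single g a =>
    obtain ⟨c, hc⟩ := isConj_iff.mp (isConj_conjRep g).symm
    -- `single g a - single 1 a` lies in the augmentation ideal, and conjugation by `c` fixes its
    -- second term while moving the first to `single (conjRep g) a`.
    refine AddSubgroup.subset_closure ⟨MonoidAlgebra.single g a - MonoidAlgebra.single 1 a,
      by simp [mem_augIdeal_iff, aug_single], c⁻¹, ?_⟩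
    rw [mul_sub, sub_mul, of_inv_mul_single_mul_of, of_inv_mul_single_mul_of, inv_inv, hc,
      mul_one, mul_inv_cancel, conjProj_single]
    abel

end GroupRing

section Witt

variable {p : ℕ} [Fact p.Prime] {K L : Type*} [CommRing K] [CommRing L] {π : Type*} [Group π]

theorem psi_add (x y : (WittVector p K)[π]) :
    psi p K π (x + y) = psi p K π x + psi p K π y := by
  simp [psi, Finsupp.mapRange_add (map_add _), Finsupp.mapDomain_add]

variable (p K π) in
noncomputable def psiAddHom : (WittVector p K)[π] →+ (WittVector p K)[π] where
  toFun := psi p K π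
  map_zero' := by simp [psi]
  map_add' := psi_add

theorem psi_single (g : π) (a : WittVector p K) :
    psi p K π (MonoidAlgebra.single g a) =
      MonoidAlgebra.single (g ^ p) (WittVector.frobenius a) := by
  simp [psi, Finsupp.mapRange_single, Finsupp.mapDomain_single]

theorem psi_mapRingHom (f : K →+* L) (x : (WittVector p K)[π]) :
    psi p L π (MonoidAlgebra.mapRingHom π (WittVector.map f) x) =
      MonoidAlgebra.mapRingHom π (WittVector.map f) (psi p K π x) := by
  induction x using MonoidAlgebra.induction_linear with
  | zero => simp [psi]
  | add x y hx hy => rw [map_add, psi_add, psi_add, hx, hy, map_add]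
  | single g a => simp only [MonoidAlgebra.mapRingHom_single, psi_single,
      WittVector.map_frobenius]

variable (p K π) in
noncomputable def conjPsi : (WittVector p K)[π] →+ (WittVector p K)[π] :=
  (conjProj _ π).comp (psiAddHom p K π)

theorem conjPsi_apply (x : (WittVector p K)[π]) :
    conjPsi p K π x = conjProj _ π (psi p K π x) :=
  rfl

theorem conjProj_psi_conjProj (x : (WittVector p K)[π]) :
    conjProj _ π (psi p K π (conjProj _ π x)) = conjProj _ π (psi p K π x) := by
  induction x using MonoidAlgebra.induction_linear with
  | zero => simp [psi]
  | add x y hx hy => rw [map_add, psi_add, psi_add, map_add, map_add, hx, hy]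
  | single g a => rw [conjProj_single, psi_single, psi_single, conjProj_single, conjProj_single,
      conjRep_pow_conjRep]

theorem conjPsi_mapRingHom (f : K →+* L) (x : (WittVector p K)[π]) :
    conjPsi p L π (MonoidAlgebra.mapRingHom π (WittVector.map f) x) =
      MonoidAlgebra.mapRingHom π (WittVector.map f) (conjPsi p K π x) := by
  rw [conjPsi_apply, conjPsi_apply, psi_mapRingHom, conjProj_mapRingHom]

theorem iterate_conjPsi_conjProj_single (k : ℕ) (g : π) (a : WittVector p K) :
    (⇑(conjPsi p K π))^[k] (conjProj _ π (MonoidAlgebra.single g a)) =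
      MonoidAlgebra.single (conjRep (g ^ p ^ k)) ((⇑(WittVector.frobenius (p := p)))^[k] a) := by
  induction k with
  | zero => simp [conjProj_single]
  | succ k ih =>
    rw [Function.iterate_succ_apply', ih, conjPsi_apply, psi_single, conjProj_single,
      conjRep_pow_conjRep, ← pow_mul, ← pow_succ, Function.iterate_succ_apply']

theorem iterate_conjPsi_conjProj {k : ℕ} (hk : ∀ g : π, g ^ p ^ k = 1)
    (x : (WittVector p K)[π]) :
    (⇑(conjPsi p K π))^[k] (conjProj _ π x) =
      MonoidAlgebra.single 1 ((⇑(WittVector.frobenius (p := p)))^[k] (aug _ π x)) := by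
  induction x using MonoidAlgebra.induction_linear with
  | zero => simp
  | add x y hx hy =>
    rw [map_add, iterate_map_add, hx, hy, map_add, iterate_map_add, MonoidAlgebra.single_add]
  | single g a => rw [iterate_conjPsi_conjProj_single, hk, conjRep_one, aug_single]

theorem mem_MqRel_iff (z : (WittVector p K)[π]) :
    z ∈ MqRel p K π ↔ ∃ c ∈ AddSubgroup.closure (conjRel _ π),
      ∃ y ∈ augIdeal (WittVector p K) π, z = c + (p • y - psi p K π y) := by
  have hpow : {y | ∃ x ∈ augIdeal (WittVector p K) π, y = p • x - psi p K π x} =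
      (p • AddMonoidHom.id (WittVector p K)[π] - psiAddHom p K π) ''
        ((augIdeal (WittVector p K) π).toAddSubgroup : Set (WittVector p K)[π]) := by
    ext y
    simp [eq_comm, psiAddHom]
  rw [MqRel, AddSubgroup.closure_union, ← conjRel, hpow, ← AddMonoidHom.map_closure,
    AddSubgroup.closure_eq, AddSubgroup.mem_sup]
  simp [eq_comm, psiAddHom]

theorem mem_MqRel_of_mapRingHom_mem [CharP K p] [PerfectRing K p] [CharP L p] [IsReduced L]
    {f : K →+* L} (hf : Function.Injective f) {k : ℕ} (hk : ∀ g : π, g ^ p ^ k = 1)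
    {x : (WittVector p K)[π]}
    (hfx : MonoidAlgebra.mapRingHom π (WittVector.map f) x ∈ MqRel p L π) : x ∈ MqRel p K π := by
  set F := MonoidAlgebra.mapRingHom π (WittVector.map (p := p) f)
  have hF : Function.Injective F :=
    MonoidAlgebra.map_injective _ (WittVector.map_injective f hf)
  obtain ⟨c, hc, y, hy, hxy⟩ := (mem_MqRel_iff _).mp hfx
  have hFρx : F (conjProj _ π x) = p • conjProj _ π y - conjPsi p L π (conjProj _ π y) := by
    rw [← conjProj_mapRingHom, hxy, map_add, conjProj_eq_zero_of_mem_closure hc, zero_add,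
      map_sub, map_nsmul, conjPsi_apply, conjProj_psi_conjProj]
  have hnil : (⇑(conjPsi p L π))^[k] (conjProj _ π y) = 0 := by
    rw [iterate_conjPsi_conjProj hk, mem_augIdeal_iff.mp hy, iterate_map_zero,
      MonoidAlgebra.single_zero]
  obtain ⟨w, hw : F w = conjProj _ π y⟩ : conjProj _ π y ∈ F.toAddMonoidHom.range := by
    refine F.toAddMonoidHom.range.mem_of_nsmul_sub_mem (conjPsi p L π) p ?_ ?_ hnil ⟨_, hFρx⟩
    · rintro _ ⟨u, rfl⟩
      exact ⟨conjPsi p K π u, (conjPsi_mapRingHom f u).symm⟩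
    · exact fun v hv => MonoidAlgebra.mem_range_map_of_nsmul_mem _ p
        (fun _ => WittVector.mem_range_map_of_nsmul_mem f) hv
  have hw_aug : w ∈ augIdeal _ π := mem_augIdeal_iff.mpr <| WittVector.map_injective f hf <| by
    rw [← aug_mapRingHom, hw, aug_conjProj, mem_augIdeal_iff.mp hy, map_zero]
  have hρx : conjProj _ π x = p • w - conjPsi p K π w :=
    hF (by rw [hFρx, map_sub, map_nsmul, ← hw, conjPsi_mapRingHom])
  refine (mem_MqRel_iff x).mpr ⟨(x - conjProj _ π x) + (psi p K π w - conjPsi p K π w),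
    add_mem (sub_conjProj_mem_closure x) (sub_conjProj_mem_closure _), w, hw_aug, ?_⟩
  rw [hρx]
  abel

end Witt

theorem injective_iota_general (p n : ℕ) [Fact p.Prime]
    (K L : Type*) [Field K] [Fintype K] [Field L]
    (hK : Fintype.card K = p ^ n)
    (f : K →+* L) (π : Type*) [Group π] [Finite π] (hπ : IsPGroup p π)
    (ι : Mq p K π →+ Mq p L π)
    (hι : ∀ (x : MonoidAlgebra (WittVector p K) π)
      (hx : x ∈ (augIdeal (WittVector p K) π).toAddSubgroup)
      (hy : MonoidAlgebra.ofCoeff (Finsupp.mapRange (⇑(WittVector.map f : WittVector p K →+* WittVector p L))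
          (map_zero _) x.coeff) ∈ (augIdeal (WittVector p L) π).toAddSubgroup),
      ι (QuotientAddGroup.mk ⟨x, hx⟩) =
        QuotientAddGroup.mk
          ⟨MonoidAlgebra.ofCoeff (Finsupp.mapRange (⇑(WittVector.map f : WittVector p K →+* WittVector p L))
            (map_zero _) x.coeff), hy⟩) :
    Function.Injective ⇑ι := by
  have : CharP K p := charP_of_card_eq_prime_pow hK
  have : CharP L p := charP_of_injective_ringHom f.injective p
  obtain ⟨N, hN⟩ := IsPGroup.iff_card.mp hπ
  have hexp : ∀ g : π, g ^ p ^ N = 1 := fun g => hN ▸ pow_card_eq_one'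
  rw [injective_iff_map_eq_zero]
  refine fun a => QuotientAddGroup.induction_on a ?_
  rintro ⟨x, hx⟩ hιx
  have hy : MonoidAlgebra.mapRingHom π (WittVector.map f) x ∈ augIdeal (WittVector p L) π := by
    rw [mem_augIdeal_iff, aug_mapRingHom, mem_augIdeal_iff.mp hx, map_zero]
  rw [hι x hx hy, QuotientAddGroup.eq_zero_iff, AddSubgroup.mem_addSubgroupOf] at hιx
  rw [QuotientAddGroup.eq_zero_iff, AddSubgroup.mem_addSubgroupOf]
  exact mem_MqRel_of_mapRingHom_mem f.injective hexp hιx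

/-- part of the proof of Theorems 1.5 and 1.6: for a finite `p`-group
`π`, an embedding `f : 𝔽_q → 𝔽_l` of finite fields with `|𝔽_q| = q = pⁿ` and
`|𝔽_l| = l = qᵐ` induces, via the ring homomorphism `W(𝔽_q) → W(𝔽_l)` of Witt vectors, a
homomorphism `ι : M_q → M_l`, and `ι` is injective. -/
theorem injective_iota (p n m : ℕ) [Fact p.Prime] (hn : 0 < n) (hm : 0 < m)
    (K L : Type*) [Field K] [Fintype K] [Field L] [Fintype L]
    (hK : Fintype.card K = p ^ n) (hL : Fintype.card L = (p ^ n) ^ m)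
    (f : K →+* L) (π : Type*) [Group π] [Finite π] (hπ : IsPGroup p π)
    (ι : Mq p K π →+ Mq p L π)
    (hι : ∀ (x : MonoidAlgebra (WittVector p K) π)
      (hx : x ∈ (augIdeal (WittVector p K) π).toAddSubgroup)
      (hy : MonoidAlgebra.ofCoeff (Finsupp.mapRange (⇑(WittVector.map f : WittVector p K →+* WittVector p L))
          (map_zero _) x.coeff) ∈ (augIdeal (WittVector p L) π).toAddSubgroup),
      ι (QuotientAddGroup.mk ⟨x, hx⟩) =
        QuotientAddGroup.mk
          ⟨MonoidAlgebra.ofCoeff (Finsupp.mapRange (⇑(WittVector.map f : WittVector p K →+* WittVector p L))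
            (map_zero _) x.coeff), hy⟩) :
    Function.Injective ⇑ι :=
  injective_iota_general p n K L hK f π hπ ι hι

end GRJJ
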